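/- Define for integers l ≥ 1 and m with |m| ≤ l the quantities c_l = √(1 + l²/k) and A_l^{0,m} = √((l+m)(l−m)/((2l+1)(2l−1))). If k ≥ Λ²(Λ+1)² and 1 ≤ m ≤ Λ, 1 ≤ l = m + j ≤ Λ with j ≥ 0, then c_l·A_l^{0,m−1} > c_{l+1}·A_{l+1}^{0,m}. -/
import Mathlib

set_option maxHeartbeats 800000

/-- `c_l = √(1 + l²/k)`. -/
noncomputable def ccoef (k l : ℝ) : ℝ := Real.sqrt (1 + l ^ 2 / k)

/-- `A_l^{0,m} = √((l+m)(l−m)/((2l+1)(2l−1)))`. -/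
noncomputable def Acoef (l m : ℝ) : ℝ :=
  Real.sqrt ((l + m) * (l - m) / ((2 * l + 1) * (2 * l - 1)))

lemma g_pos (a b : ℝ) (ha : 0 ≤ a) (hb : 0 ≤ b) :
    (2+a+b)^2 * ((2+a+b)^2 - (1+a)^2) * (2*(1+a+b) - 1) <
      2 * (1+a+b)^2 * (2+a+b)^2 * (2*(1+a) - 1) * ((1+a+b) - (1+a) + 1)
        + (1+a+b)^2 * ((1+a+b)^2 - a^2) * (2*(1+a+b) + 3) := by
  nlinarith [mul_nonneg (pow_nonneg ha 1) (pow_nonneg hb 0),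
    mul_nonneg (pow_nonneg ha 0) (pow_nonneg hb 1),
    mul_nonneg (pow_nonneg ha 0) (pow_nonneg hb 2),
    mul_nonneg (pow_nonneg ha 0) (pow_nonneg hb 3),
    mul_nonneg (pow_nonneg ha 0) (pow_nonneg hb 4),
    mul_nonneg (pow_nonneg ha 0) (pow_nonneg hb 5),
    mul_nonneg (pow_nonneg ha 1) (pow_nonneg hb 1),
    mul_nonneg (pow_nonneg ha 1) (pow_nonneg hb 2),
    mul_nonneg (pow_nonneg ha 1) (pow_nonneg hb 3),
    mul_nonneg (pow_nonneg ha 1) (pow_nonneg hb 4),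
    mul_nonneg (pow_nonneg ha 1) (pow_nonneg hb 5),
    mul_nonneg (pow_nonneg ha 2) (pow_nonneg hb 0),
    mul_nonneg (pow_nonneg ha 2) (pow_nonneg hb 1),
    mul_nonneg (pow_nonneg ha 2) (pow_nonneg hb 2),
    mul_nonneg (pow_nonneg ha 2) (pow_nonneg hb 3),
    mul_nonneg (pow_nonneg ha 2) (pow_nonneg hb 4),
    mul_nonneg (pow_nonneg ha 3) (pow_nonneg hb 0),
    mul_nonneg (pow_nonneg ha 3) (pow_nonneg hb 1),
    mul_nonneg (pow_nonneg ha 3) (pow_nonneg hb 2),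
    mul_nonneg (pow_nonneg ha 3) (pow_nonneg hb 3),
    mul_nonneg (pow_nonneg ha 4) (pow_nonneg hb 0),
    mul_nonneg (pow_nonneg ha 4) (pow_nonneg hb 1),
    mul_nonneg (pow_nonneg ha 4) (pow_nonneg hb 2),
    mul_nonneg (pow_nonneg ha 5) (pow_nonneg hb 0),
    mul_nonneg (pow_nonneg ha 5) (pow_nonneg hb 1)]

lemma key_poly (L M k : ℝ) (hM : 1 ≤ M) (hL : M ≤ L) (hk : L^2 * (L+1)^2 ≤ k) :
    (k + (L+1)^2) * ((L+1+M) * (L+1-M)) * (2*L - 1) <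
      (k + L^2) * ((L+M-1) * (L-M+1)) * (2*L + 3) := by
  have h1 : 0 ≤ (k - L^2 * (L+1)^2) * (2*(2*M-1)*(L-M+1)) := by
    apply mul_nonneg (by linarith)
    have : (0:ℝ) ≤ 2*M-1 := by linarith
    have : (0:ℝ) ≤ L-M+1 := by linarith
    positivity
  have h2 := g_pos (M-1) (L-M) (by linarith) (by linarith)
  nlinarith [h1, h2]

theorem stmt_15 (Λ : ℕ) (hΛ : 1 ≤ Λ) (k : ℝ) (hk : (Λ : ℝ)^2 * ((Λ : ℝ) + 1)^2 ≤ k)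
    (m j l : ℕ) (hm1 : 1 ≤ m) (hmΛ : m ≤ Λ) (hl : l = m + j) (hl1 : 1 ≤ l) (hlΛ : l ≤ Λ) :
    ccoef k (l + 1) * Acoef ((l : ℝ) + 1) (m : ℝ) <
      ccoef k (l : ℝ) * Acoef (l : ℝ) ((m : ℝ) - 1) := by
  set L : ℝ := (l : ℝ) with hLdef
  set M : ℝ := (m : ℝ) with hMdef
  have hM1 : (1:ℝ) ≤ M := by rw [hMdef]; exact_mod_cast hm1
  have hML : M ≤ L := by
    have h : m ≤ l := by omega
    rw [hMdef, hLdef]; exact_mod_cast h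
  have hL1 : (1:ℝ) ≤ L := le_trans hM1 hML
  have hΛL : L ≤ (Λ:ℝ) := by rw [hLdef]; exact_mod_cast hlΛ
  have hkL : L^2 * (L+1)^2 ≤ k := by
    refine le_trans ?_ hk
    have h1 : L^2 ≤ (Λ:ℝ)^2 := by nlinarith
    have h2 : (L+1)^2 ≤ ((Λ:ℝ)+1)^2 := by nlinarith
    nlinarith
  have hkpos : (0:ℝ) < k := by nlinarith
  unfold ccoef Acoef
  have hQ1 : (0:ℝ) < (2*(L+1)+1) * (2*(L+1)-1) := by nlinarith
  have hQ2 : (0:ℝ) < (2*L+1) * (2*L-1) := by nlinarith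
  rw [← Real.sqrt_mul (by positivity), ← Real.sqrt_mul (by positivity)]
  apply Real.sqrt_lt_sqrt
  · have hP1 : (0:ℝ) ≤ (L+1+M) * (L+1-M) := by nlinarith
    positivity
  · have e1 : 1 + (L+1)^2 / k = (k + (L+1)^2) / k := by field_simp
    have e2 : 1 + L^2 / k = (k + L^2) / k := by field_simp
    rw [e1, e2, div_mul_div_comm, div_mul_div_comm]
    rw [div_lt_div_iff₀ (by positivity) (by positivity)]
    have hkey := key_poly L M k hM1 hML hkL
    have hc : (0:ℝ) < k * (2*L+1) := by nlinarith
    have h2 := mul_lt_mul_of_pos_right hkey hc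
    nlinarith [h2]
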